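/- arXiv:2509.05744 — 3 statements merged into one kernel-verified Lean document; each statement's English description precedes it below -/
import Mathlib

section
/- Let r ≥ 2 be a real number and let Z_n, Y_n, Z, Y be real random variables on a probability space (Ω, ℱ, P) with finite absolute moments of order r−1, such that Z_n → Z and Y_n → Y in the L^{r−1} norm. If for every n and every η ∈ ℝ one has E[max(η−Z_n,0)^{r−1}] ≤ E[max(η−Y_n,0)^{r−1}], then E[max(η−Z,0)^{r−1}] ≤ E[max(η−Y,0)^{r−1}] for all η ∈ ℝ. (Closedness of the graph of the map Y ↦ {Z : Z dominates Y in the r-th order} under L^{r−1} convergence.) -/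
open MeasureTheory Filter Set

noncomputable section

/-- Distribution function `F_Z(η) = P(Z ≤ η)`. -/
def cdfRV {Ω : Type*} [MeasurableSpace Ω] (P : Measure Ω) (Z : Ω → ℝ) (η : ℝ) : ℝ :=
  (P {ω | Z ω ≤ η}).toReal

/-- Quantile function `F⁻¹_Z(p) = inf {η | F_Z(η) ≥ p}`. -/
def qf {Ω : Type*} [MeasurableSpace Ω] (P : Measure Ω) (Z : Ω → ℝ) (p : ℝ) : ℝ :=
  sInf {η : ℝ | p ≤ cdfRV P Z η}

/-- Absolute Lorenz function `F^{(-2)}_Z(p) = ∫₀^p F⁻¹_Z(t) dt`. -/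
def lorenz {Ω : Type*} [MeasurableSpace Ω] (P : Measure Ω) (Z : Ω → ℝ) (p : ℝ) : ℝ :=
  ∫ t in (0:ℝ)..p, qf P Z t

/-- Shortfall function `F^{(2)}_Z(η) = E[max(η - Z, 0)]`. -/
def shortfall {Ω : Type*} [MeasurableSpace Ω] (P : Measure Ω) (Z : Ω → ℝ) (η : ℝ) : ℝ :=
  ∫ ω, max (η - Z ω) 0 ∂P

/-- Second-order stochastic dominance. -/
def SSD {Ω : Type*} [MeasurableSpace Ω] (P : Measure Ω) (Z Y : Ω → ℝ) : Prop :=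
  ∀ η : ℝ, shortfall P Z η ≤ shortfall P Y η

/-- First-order Wasserstein distance. -/
def W1 {Ω : Type*} [MeasurableSpace Ω] (P : Measure Ω) (X Z : Ω → ℝ) : ℝ :=
  ∫ p in (0:ℝ)..1, |qf P X p - qf P Z p|

/-- Distance from `X` to the set `A₂(Y)` of integrable random variables dominating `Y`
in the second order, in terms of `W₁`. -/
def distA2 {Ω : Type*} [MeasurableSpace Ω] (P : Measure Ω) (X Y : Ω → ℝ) : ℝ :=
  sInf {d : ℝ | ∃ Z : Ω → ℝ, Integrable Z P ∧ SSD P Z Y ∧ d = W1 P X Z}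

/-- An atomless probability space. -/
def Atomless {Ω : Type*} [MeasurableSpace Ω] (P : Measure Ω) : Prop :=
  ∀ s : Set Ω, MeasurableSet s → P s ≠ 0 →
    ∃ t : Set Ω, t ⊆ s ∧ MeasurableSet t ∧ 0 < P t ∧ P t < P s

/-- `r`-th order shortfall transform `F^{(r)}_Z(η) = (1/Γ(r)) E[max(η-Z,0)^{r-1}]`,
with the convention `max(η-z,0)^0 = 𝟙_{z ≤ η}`. -/
def sfr {Ω : Type*} [MeasurableSpace Ω] (P : Measure Ω) (Z : Ω → ℝ) (r η : ℝ) : ℝ :=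
  (1 / Real.Gamma r) * ∫ ω, (if Z ω ≤ η then (η - Z ω) ^ (r - 1) else 0) ∂P

/-- `r`-th order stochastic dominance: `Z ≽_{(r)} Y`. -/
def domR {Ω : Type*} [MeasurableSpace Ω] (P : Measure Ω) (Z Y : Ω → ℝ) (r : ℝ) : Prop :=
  ∀ η : ℝ, sfr P Z r η ≤ sfr P Y r η


/-!
With `(x)⁺ = max x 0`, the shortfall is `F^{(r)}_Z(η) = Γ(r)⁻¹ ‖(η - Z)⁺‖_{r-1}^{r-1}`.
Since `x ↦ (η - x)⁺` is 1-Lipschitz, `L^{r-1}` convergence of `Z_n` to `Z` carries over to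
`(η - Z_n)⁺ → (η - Z)⁺`, so `F^{(r)}_{Z_n}(η) → F^{(r)}_Z(η)`; the dominance inequalities then
pass to the limit.
-/

section LpContinuity

variable {α E F ι : Type*} [MeasurableSpace α] {μ : Measure α} {p : ENNReal} {l : Filter ι}
  [NormedAddCommGroup E] [NormedAddCommGroup F]

theorem LipschitzWith.tendsto_eLpNorm_comp_sub {K : NNReal} {g : E → F} (hg : LipschitzWith K g)
    {f : ι → α → E} {f₀ : α → E}
    (h : Tendsto (fun i => eLpNorm (fun x => f i x - f₀ x) p μ) l (nhds 0)) :
    Tendsto (fun i => eLpNorm (fun x => g (f i x) - g (f₀ x)) p μ) l (nhds 0) := by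
  have hle : ∀ i, eLpNorm (fun x => g (f i x) - g (f₀ x)) p μ
      ≤ ENNReal.ofReal K * eLpNorm (fun x => f i x - f₀ x) p μ := fun i =>
    eLpNorm_le_mul_eLpNorm_of_ae_le_mul (.of_forall fun x => hg.norm_sub_le _ _) p
  have hlim := ENNReal.Tendsto.const_mul (a := ENNReal.ofReal K) h (.inr ENNReal.ofReal_ne_top)
  rw [mul_zero] at hlim
  exact tendsto_of_tendsto_of_tendsto_of_le_of_le tendsto_const_nhds hlim (fun _ => zero_le) hle

theorem tendsto_lpNorm_of_tendsto_eLpNorm_sub [Fact (1 ≤ p)] {f : ι → α → E} {f₀ : α → E}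
    (hf : ∀ i, MemLp (f i) p μ) (hf₀ : MemLp f₀ p μ)
    (h : Tendsto (fun i => eLpNorm (f i - f₀) p μ) l (nhds 0)) :
    Tendsto (fun i => lpNorm (f i) p μ) l (nhds (lpNorm f₀ p μ)) := by
  have hLp := ((Lp.tendsto_Lp_iff_tendsto_eLpNorm'' f hf f₀ hf₀).2 h).norm
  simpa only [Lp.norm_toLp, toReal_eLpNorm (hf _).aestronglyMeasurable,
    toReal_eLpNorm hf₀.aestronglyMeasurable] using hLp

theorem integral_norm_rpow_eq_lpNorm_rpow {q : ℝ} (hq : 0 < q) {f : α → E}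
    (hf : AEStronglyMeasurable f μ) :
    ∫ x, ‖f x‖ ^ q ∂μ = lpNorm f (ENNReal.ofReal q) μ ^ q := by
  rw [lpNorm_eq_integral_norm_rpow_toReal (by simpa using hq) ENNReal.ofReal_ne_top hf,
    ENNReal.toReal_ofReal hq.le, ← Real.rpow_mul (integral_nonneg fun _ => by positivity),
    inv_mul_cancel₀ hq.ne', Real.rpow_one]

end LpContinuity

theorem ite_le_rpow_eq_max_rpow {z η q : ℝ} (hq : q ≠ 0) :
    (if z ≤ η then (η - z) ^ q else 0) = max (η - z) 0 ^ q := by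
  split_ifs with h
  · rw [max_eq_left (sub_nonneg.2 h)]
  · rw [max_eq_right (by linarith), Real.zero_rpow hq]

theorem sfr_eq_lpNorm_rpow {Ω : Type*} [MeasurableSpace Ω] {P : Measure Ω} {r : ℝ}
    (hr : 1 < r) {W : Ω → ℝ} (hW : AEStronglyMeasurable W P) (η : ℝ) :
    sfr P W r η = 1 / Real.Gamma r *
      lpNorm (fun ω => max (η - W ω) 0) (ENNReal.ofReal (r - 1)) P ^ (r - 1) := by
  have hq : 0 < r - 1 := by linarith
  have hpos : AEStronglyMeasurable (fun ω => max (η - W ω) 0) P :=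
    (aestronglyMeasurable_const.sub hW).sup aestronglyMeasurable_const
  rw [sfr, ← integral_norm_rpow_eq_lpNorm_rpow hq hpos]
  congr 2 with ω
  rw [ite_le_rpow_eq_max_rpow hq.ne', Real.norm_of_nonneg (le_max_right _ _)]

theorem tendsto_sfr_of_tendsto_eLpNorm_sub {Ω ι : Type*} [MeasurableSpace Ω] {P : Measure Ω}
    [IsFiniteMeasure P] {l : Filter ι} {r : ℝ} (hr : 2 ≤ r) {X : ι → Ω → ℝ} {X₀ : Ω → ℝ}
    (hX : ∀ i, MemLp (X i) (ENNReal.ofReal (r - 1)) P)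
    (hX₀ : MemLp X₀ (ENNReal.ofReal (r - 1)) P)
    (hconv : Tendsto (fun i => eLpNorm (fun ω => X i ω - X₀ ω) (ENNReal.ofReal (r - 1)) P)
      l (nhds 0)) (η : ℝ) :
    Tendsto (fun i => sfr P (X i) r η) l (nhds (sfr P X₀ r η)) := by
  have : Fact (1 ≤ ENNReal.ofReal (r - 1)) := ⟨by simpa using (by linarith : 1 ≤ r - 1)⟩
  have hmem : ∀ W, MemLp W (ENNReal.ofReal (r - 1)) P →
      MemLp (fun ω => max (η - W ω) 0) (ENNReal.ofReal (r - 1)) P :=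
    fun W hW => ((memLp_const η).sub hW).pos_part
  have hlip : LipschitzWith 1 fun x : ℝ => max (η - x) 0 := by
    simpa [Function.comp_def] using
      Lp.lipschitzWith_pos_part.comp (IsometryEquiv.subLeft η).isometry.lipschitz
  have hnorm := tendsto_lpNorm_of_tendsto_eLpNorm_sub (fun i => hmem _ (hX i)) (hmem _ hX₀)
    (hlip.tendsto_eLpNorm_comp_sub hconv)
  simp only [sfr_eq_lpNorm_rpow (by linarith) (hX _).aestronglyMeasurable,
    sfr_eq_lpNorm_rpow (by linarith) hX₀.aestronglyMeasurable]
  exact (hnorm.rpow_const (.inr (by linarith))).const_mul _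

/-- closedness of the `r`-th order dominance relation under
`L^{r-1}` convergence. -/
theorem stmt1 {Ω : Type*} [MeasurableSpace Ω] (P : Measure Ω) [IsProbabilityMeasure P]
    (r : ℝ) (hr : 2 ≤ r) (Zn Yn : ℕ → Ω → ℝ) (Z Y : Ω → ℝ)
    (hZn : ∀ n, MemLp (Zn n) (ENNReal.ofReal (r - 1)) P)
    (hYn : ∀ n, MemLp (Yn n) (ENNReal.ofReal (r - 1)) P)
    (hZ : MemLp Z (ENNReal.ofReal (r - 1)) P)
    (hY : MemLp Y (ENNReal.ofReal (r - 1)) P)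
    (hZconv : Tendsto (fun n => eLpNorm (fun ω => Zn n ω - Z ω) (ENNReal.ofReal (r - 1)) P)
      atTop (nhds 0))
    (hYconv : Tendsto (fun n => eLpNorm (fun ω => Yn n ω - Y ω) (ENNReal.ofReal (r - 1)) P)
      atTop (nhds 0))
    (hdom : ∀ n, domR P (Zn n) (Yn n) r) :
    domR P Z Y r := fun η =>
  le_of_tendsto_of_tendsto' (tendsto_sfr_of_tendsto_eLpNorm_sub hr hZn hZ hZconv η)
    (tendsto_sfr_of_tendsto_eLpNorm_sub hr hYn hY hYconv η) fun n => hdom n η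

end
end

section
/- Let (Ω, ℱ, P) be an atomless probability space, let X, Y ∈ L¹(Ω, ℱ, P), and let r ∈ [1,2). For every random variable Z ∈ L¹(Ω, ℱ, P) that dominates Y in the r-th stochastic order, there exists a random variable Z̄ ∈ L¹(Ω, ℱ, P) dominating Y in the r-th stochastic order such that F⁻¹_{Z̄}(p) ≥ F⁻¹_X(p) for all p ∈ (0,1) and W₁(X, Z̄) ≤ W₁(X, Z). -/
open MeasureTheory Filter Set Topology
open scoped ENNReal

noncomputable section

section Aux

variable {Ω : Type*} [MeasurableSpace Ω] {P : Measure Ω} [IsProbabilityMeasure P]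

lemma atomless_half (hP : Atomless P) {s : Set Ω} (hs : MeasurableSet s) (h0 : P s ≠ 0) :
    ∃ u, u ⊆ s ∧ MeasurableSet u ∧ 0 < P u ∧ P u ≤ P s / 2 := by
  obtain ⟨t, hts, htm, ht0, htlt⟩ := hP s hs h0
  by_cases hc : P t ≤ P s / 2
  · exact ⟨t, hts, htm, ht0, hc⟩
  · push_neg at hc
    refine ⟨s \ t, diff_subset, hs.diff htm, ?_, ?_⟩
    · rw [measure_diff hts htm.nullMeasurableSet (measure_ne_top P t)]
      exact tsub_pos_iff_lt.2 htlt
    · rw [measure_diff hts htm.nullMeasurableSet (measure_ne_top P t)]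
      calc P s - P t ≤ P s - P s / 2 := tsub_le_tsub_left hc.le _
        _ = P s / 2 := ENNReal.sub_half (measure_ne_top P s)

lemma atomless_small (hP : Atomless P) {s : Set Ω} (hs : MeasurableSet s) (h0 : P s ≠ 0)
    {ε : ℝ≥0∞} (hε : 0 < ε) :
    ∃ u, u ⊆ s ∧ MeasurableSet u ∧ 0 < P u ∧ P u ≤ ε := by
  have key : ∀ n : ℕ, ∃ u, u ⊆ s ∧ MeasurableSet u ∧ 0 < P u ∧ P u ≤ 2⁻¹ ^ n := by
    intro n
    induction n with
    | zero => exact ⟨s, Subset.rfl, hs, pos_iff_ne_zero.2 h0, by simpa using prob_le_one⟩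
    | succ n ih =>
      obtain ⟨u, hus, hum, hu0, hule⟩ := ih
      obtain ⟨v, hvu, hvm, hv0, hvle⟩ := atomless_half hP hum hu0.ne'
      refine ⟨v, hvu.trans hus, hvm, hv0, ?_⟩
      calc P v ≤ P u / 2 := hvle
        _ ≤ 2⁻¹ ^ n / 2 := by exact ENNReal.div_le_div_right hule 2
        _ = 2⁻¹ ^ (n + 1) := by
          rw [pow_succ, ENNReal.div_eq_inv_mul, mul_comm]
  obtain ⟨n, hn⟩ := ENNReal.exists_inv_two_pow_lt hε.ne'
  obtain ⟨u, h1, h2, h3, h4⟩ := key n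
  exact ⟨u, h1, h2, h3, h4.trans hn.le⟩

/-- Sierpiński: an atomless measure attains every intermediate value on subsets. -/
lemma atomless_exact (hP : Atomless P) {s : Set Ω} (hs : MeasurableSet s) {t : ℝ≥0∞}
    (ht : t ≤ P s) :
    ∃ u, u ⊆ s ∧ MeasurableSet u ∧ P u = t := by
  classical
  set adm : Set Ω → Set Ω → Prop :=
    fun u w => w ⊆ s \ u ∧ MeasurableSet w ∧ P u + P w ≤ t with hadm
  have hstep : ∀ u : Set Ω, ∃ w, (P u ≤ t) →
      (adm u w ∧ ∀ w', adm u w' → P w' ≤ 2 * P w) := by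
    intro u
    by_cases hut : P u ≤ t
    swap
    · exact ⟨∅, fun h => absurd h hut⟩
    set δ := ⨆ (w : Set Ω) (_ : adm u w), P w with hδ
    have hδle : δ ≤ t := by
      refine iSup₂_le fun w hw => ?_
      calc P w ≤ P u + P w := le_add_self
        _ ≤ t := hw.2.2
    by_cases hδ0 : δ = 0
    · refine ⟨∅, fun _ => ⟨⟨empty_subset _, MeasurableSet.empty, by simpa using hut⟩,
        fun w' hw' => ?_⟩⟩
      have : P w' ≤ δ := le_iSup₂ (f := fun w _ => P w) w' hw'
      rw [hδ0] at this
      simp [le_zero_iff.1 this]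
    · have hδtop : δ ≠ ⊤ := (hδle.trans_lt (ht.trans_lt (measure_lt_top P s))).ne
      have hhalf : δ / 2 < δ := ENNReal.half_lt_self hδ0 hδtop
      rw [hδ] at hhalf
      simp only [lt_iSup_iff] at hhalf
      obtain ⟨w, hwadm, hww⟩ := hhalf
      refine ⟨w, fun _ => ⟨hwadm, fun w' hw' => ?_⟩⟩
      have h1 : P w' ≤ δ := le_iSup₂ (f := fun w _ => P w) w' hw'
      have h2 : δ < 2 * P w := by
        rw [mul_comm]
        exact (ENNReal.div_lt_iff (Or.inl two_ne_zero) (Or.inl ENNReal.ofNat_ne_top)).1 hww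
      exact h1.trans h2.le
  choose W hW using hstep
  set g : Set Ω → Set Ω := fun u => u ∪ W u with hg
  set u : ℕ → Set Ω := fun n => g^[n] ∅ with hu
  have husucc : ∀ n, u (n + 1) = u n ∪ W (u n) := by
    intro n
    rw [hu]
    simp [Function.iterate_succ_apply', hg]
  have hinv : ∀ n, u n ⊆ s ∧ MeasurableSet (u n) ∧ P (u n) ≤ t := by
    intro n
    induction n with
    | zero => simpa [hu] using ⟨empty_subset s, MeasurableSet.empty, zero_le t⟩
    | succ n ih =>
      obtain ⟨h1, h2, h3⟩ := ih
      obtain ⟨⟨hw1, hw2, hw3⟩, -⟩ := hW (u n) h3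
      rw [husucc n]
      refine ⟨union_subset h1 (hw1.trans diff_subset), h2.union hw2, ?_⟩
      rw [measure_union (Disjoint.mono_right hw1 disjoint_sdiff_right) hw2]
      exact hw3
  have hPsum : ∀ n, P (u (n + 1)) = P (u n) + P (W (u n)) := by
    intro n
    obtain ⟨h1, h2, h3⟩ := hinv n
    obtain ⟨⟨hw1, hw2, hw3⟩, -⟩ := hW (u n) h3
    rw [husucc n, measure_union (Disjoint.mono_right hw1 disjoint_sdiff_right) hw2]
  have humono : Monotone u := by
    refine monotone_nat_of_le_succ fun n => ?_
    rw [husucc n]; exact subset_union_left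
  set A := ⋃ n, u n with hA
  have hAs : A ⊆ s := iUnion_subset fun n => (hinv n).1
  have hAm : MeasurableSet A := MeasurableSet.iUnion fun n => (hinv n).2.1
  have hPA : P A ≤ t := by
    rw [hA, humono.directed_le.measure_iUnion]
    exact iSup_le fun n => (hinv n).2.2
  rcases eq_or_lt_of_le hPA with heq | hlt
  · exact ⟨A, hAs, hAm, heq⟩
  · exfalso
    have hdm : MeasurableSet (s \ A) := hs.diff hAm
    have hdP : P (s \ A) ≠ 0 := by
      rw [measure_diff hAs hAm.nullMeasurableSet (measure_ne_top P A)]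
      intro h
      have : P s ≤ P A := tsub_eq_zero_iff_le.1 h
      exact absurd (ht.trans this) (not_le.2 hlt)
    obtain ⟨w, hws, hwm, hw0, hwle⟩ := atomless_small hP hdm hdP (tsub_pos_iff_lt.2 hlt)
    -- w is admissible at every stage
    have hadmw : ∀ n, adm (u n) w := by
      intro n
      refine ⟨hws.trans (diff_subset_diff_right (subset_iUnion u n)), hwm, ?_⟩
      calc P (u n) + P w ≤ P A + (t - P A) :=
            add_le_add (measure_mono (subset_iUnion u n)) hwle
        _ = t := add_tsub_cancel_of_le hPA
    set c := P w / 2 with hc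
    have hkey : ∀ n : ℕ, (n : ℝ≥0∞) * c ≤ P (u n) := by
      intro n
      induction n with
      | zero => simp
      | succ n ih =>
        obtain ⟨-, hmax⟩ := hW (u n) (hinv n).2.2
        have h1 : P w ≤ 2 * P (W (u n)) := hmax w (hadmw n)
        have h2 : c ≤ P (W (u n)) := by
          rw [hc, ENNReal.div_le_iff_le_mul (Or.inl two_ne_zero) (Or.inl ENNReal.ofNat_ne_top),
            mul_comm]
          exact h1
        rw [hPsum n]
        push_cast
        rw [add_mul, one_mul]
        exact add_le_add ih h2
    have hc0 : c ≠ 0 := by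
      rw [hc]
      simp [hw0.ne', ENNReal.div_eq_zero_iff]
    have hctop : c ≠ ⊤ := by
      rw [hc]
      exact (ENNReal.div_lt_top (measure_ne_top P w) two_ne_zero).ne
    have hfin : 1 / c ≠ ⊤ := by simp [hc0, ENNReal.div_eq_top]
    obtain ⟨n, hn⟩ := ENNReal.exists_nat_gt hfin
    have h1 : (1 : ℝ≥0∞) < n * c := by
      rw [← ENNReal.div_lt_iff (Or.inl hc0) (Or.inl hctop)]
      exact hn
    have h2 : P (u n) ≤ 1 := prob_le_one
    exact absurd ((hkey n).trans h2) (not_le.2 h1)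



lemma dyadic_family (hP : Atomless P) :
    ∃ A : ℕ → ℕ → Set Ω,
      (∀ n k, MeasurableSet (A n k)) ∧ (∀ n k, A n k ⊆ A n (k + 1)) ∧
      (∀ n k, 2 ^ n ≤ k → A n k = univ) ∧ (∀ n k, A (n + 1) (2 * k) = A n k) ∧
      (∀ n k, P (A n k) = min ((k : ℝ≥0∞) / 2 ^ n) 1) := by
  classical
  have hstep : ∀ (f : ℕ → Set Ω) (j : ℕ), ∃ v,
      (MeasurableSet (f j) ∧ MeasurableSet (f (j + 1))) →
      (v ⊆ f (j + 1) \ f j ∧ MeasurableSet v ∧ P v = P (f (j + 1) \ f j) / 2) := by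
    intro f j
    by_cases h : MeasurableSet (f j) ∧ MeasurableSet (f (j + 1))
    · obtain ⟨u, h1, h2, h3⟩ := atomless_exact hP (h.2.diff h.1)
        (ENNReal.half_le_self (a := P (f (j + 1) \ f j)))
      exact ⟨u, fun _ => ⟨h1, h2, h3⟩⟩
    · exact ⟨∅, fun hh => absurd hh h⟩
  choose V hV using hstep
  set step : (ℕ → Set Ω) → (ℕ → Set Ω) :=
    fun f k => if 2 ∣ k then f (k / 2) else f (k / 2) ∪ V f (k / 2) with hstepdef
  set A : ℕ → ℕ → Set Ω := fun n => step^[n] (fun k => if k = 0 then ∅ else univ) with hAdef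
  have hAsucc : ∀ n, A (n + 1) = step (A n) := by
    intro n; rw [hAdef]; simp [Function.iterate_succ_apply']
  have hse : ∀ (f : ℕ → Set Ω) (j : ℕ), step f (2 * j) = f j := by
    intro f j
    have h1 : 2 ∣ 2 * j := ⟨j, rfl⟩
    have h2 : 2 * j / 2 = j := by omega
    simp [hstepdef, h1, h2]
  have hso : ∀ (f : ℕ → Set Ω) (j : ℕ), step f (2 * j + 1) = f j ∪ V f j := by
    intro f j
    have h1 : ¬ (2 ∣ 2 * j + 1) := by omega
    have h2 : (2 * j + 1) / 2 = j := by omega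
    simp [hstepdef, h1, h2]
  -- the invariant
  have hinv : ∀ n, (∀ k, MeasurableSet (A n k)) ∧ (∀ k, A n k ⊆ A n (k + 1)) ∧
      (∀ k, 2 ^ n ≤ k → A n k = univ) ∧
      (∀ k, P (A n k) = min ((k : ℝ≥0∞) / 2 ^ n) 1) := by
    intro n
    induction n with
    | zero =>
      have hA0 : A 0 = fun k => if k = 0 then ∅ else univ := rfl
      rw [hA0]
      refine ⟨fun k => ?_, fun k => ?_, fun k hk => ?_, fun k => ?_⟩
      · by_cases h : k = 0 <;> simp [h]
      · by_cases h : k = 0 <;> simp [h]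
      · have : k ≠ 0 := by omega
        simp [this]
      · by_cases h : k = 0
        · simp [h]
        · have h1 : (1 : ℝ≥0∞) ≤ (k : ℝ≥0∞) := by
            exact_mod_cast Nat.one_le_iff_ne_zero.2 h
          simp [h, min_eq_right, h1]
    | succ n ih =>
      obtain ⟨hm, hmono, huniv, hmeas⟩ := ih
      have hVp : ∀ j, V (A n) j ⊆ A n (j + 1) \ A n j ∧ MeasurableSet (V (A n) j) ∧
          P (V (A n) j) = P (A n (j + 1) \ A n j) / 2 := fun j => hV (A n) j ⟨hm j, hm (j + 1)⟩
      have hdisj : ∀ j, Disjoint (A n j) (V (A n) j) :=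
        fun j => Disjoint.mono_right (hVp j).1 disjoint_sdiff_right
      have hPunion : ∀ j, P (A n j ∪ V (A n) j) = P (A n j) + P (V (A n) j) :=
        fun j => measure_union (hdisj j) (hVp j).2.1
      have hPdiff : ∀ j, P (A n (j + 1) \ A n j) = P (A n (j + 1)) - P (A n j) :=
        fun j => measure_diff (hmono j) (hm j).nullMeasurableSet (measure_ne_top P _)
      rw [hAsucc]
      have hcast : ((2 : ℕ) : ℝ≥0∞) = 2 := by norm_num
      have h2n : ((2 : ℝ≥0∞) ^ n) ≠ 0 := by positivity
      have h2nt : ((2 : ℝ≥0∞) ^ n) ≠ ⊤ := by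
        exact (ENNReal.pow_lt_top (by norm_num)).ne
      -- value of the measure at even/odd indices of the next level
      have heven : ∀ j, ((2 * j : ℕ) : ℝ≥0∞) / 2 ^ (n + 1) = (j : ℝ≥0∞) / 2 ^ n := by
        intro j
        push_cast
        rw [pow_succ, mul_comm ((2:ℝ≥0∞) ^ n) 2]
        exact ENNReal.mul_div_mul_left _ _ two_ne_zero ENNReal.ofNat_ne_top
      refine ⟨fun k => ?_, fun k => ?_, fun k hk => ?_, fun k => ?_⟩
      · rcases Nat.even_or_odd k with ⟨j, hj⟩ | ⟨j, hj⟩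
        · rw [hj, ← two_mul, hse]; exact hm j
        · rw [hj, hso]; exact (hm j).union (hVp j).2.1
      · rcases Nat.even_or_odd k with ⟨j, hj⟩ | ⟨j, hj⟩
        · rw [hj, ← two_mul, hse, hso]; exact subset_union_left
        · rw [hj, hso]
          have : 2 * j + 1 + 1 = 2 * (j + 1) := by ring
          rw [this, hse]
          exact union_subset (hmono j) ((hVp j).1.trans diff_subset)
      · rcases Nat.even_or_odd k with ⟨j, hj⟩ | ⟨j, hj⟩
        · rw [hj, ← two_mul, hse]
          refine huniv j ?_
          have : 2 ^ (n + 1) = 2 * 2 ^ n := by ring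
          omega
        · rw [hj, hso]
          have hju : A n j = univ := by
            refine huniv j ?_
            have : 2 ^ (n + 1) = 2 * 2 ^ n := by ring
            omega
          rw [hju, univ_union]
      · rcases Nat.even_or_odd k with ⟨j, hj⟩ | ⟨j, hj⟩
        · rw [hj, ← two_mul, hse, hmeas j, heven]
        · rw [hj, hso, hPunion j, hmeas j, (hVp j).2.2, hPdiff j, hmeas j, hmeas (j + 1)]
          -- now pure ENNReal arithmetic
          have hkey : ((2 * j + 1 : ℕ) : ℝ≥0∞) / 2 ^ (n + 1)
              = (j : ℝ≥0∞) / 2 ^ n + 1 / 2 ^ (n + 1) := by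
            push_cast
            rw [ENNReal.add_div, pow_succ, mul_comm ((2:ℝ≥0∞) ^ n) 2,
              ENNReal.mul_div_mul_left _ _ two_ne_zero ENNReal.ofNat_ne_top]
          by_cases hj2 : j + 1 ≤ 2 ^ n
          · have hja : (j : ℝ≥0∞) ≤ 2 ^ n := by
              have : ((j : ℕ) : ℝ≥0∞) ≤ ((2 ^ n : ℕ) : ℝ≥0∞) := by
                exact_mod_cast Nat.le_of_succ_le hj2
              simpa [Nat.cast_pow] using this
            have hjb : (((j + 1) : ℕ) : ℝ≥0∞) ≤ 2 ^ n := by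
              have : (((j + 1) : ℕ) : ℝ≥0∞) ≤ ((2 ^ n : ℕ) : ℝ≥0∞) := by exact_mod_cast hj2
              simpa [Nat.cast_pow] using this
            have ha : (j : ℝ≥0∞) / 2 ^ n ≤ 1 :=
              ENNReal.div_le_of_le_mul (by simpa using hja)
            have hb : (((j + 1) : ℕ) : ℝ≥0∞) / 2 ^ n ≤ 1 :=
              ENNReal.div_le_of_le_mul (by simpa using hjb)
            have hsplit : (((j + 1) : ℕ) : ℝ≥0∞) / 2 ^ n = (j : ℝ≥0∞) / 2 ^ n + 1 / 2 ^ n := by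
              push_cast
              exact ENNReal.add_div
            have hfin : (j : ℝ≥0∞) / 2 ^ n ≠ ⊤ := (ha.trans_lt ENNReal.one_lt_top).ne
            have hdd : (1 : ℝ≥0∞) / 2 ^ n / 2 = 1 / 2 ^ (n + 1) := by
              rw [pow_succ, one_div, one_div,
                ENNReal.mul_inv (Or.inl h2n) (Or.inl h2nt), ← div_eq_mul_inv]
            have hnat : 2 * j + 1 ≤ 2 ^ (n + 1) := by
              have h2 : 2 ^ (n + 1) = 2 * 2 ^ n := by ring
              omega
            have h2j : ((2 * j + 1 : ℕ) : ℝ≥0∞) ≤ 2 ^ (n + 1) := by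
              have : ((2 * j + 1 : ℕ) : ℝ≥0∞) ≤ ((2 ^ (n + 1) : ℕ) : ℝ≥0∞) := by
                exact_mod_cast hnat
              simpa [Nat.cast_pow] using this
            have hq : ((2 * j + 1 : ℕ) : ℝ≥0∞) / 2 ^ (n + 1) ≤ 1 :=
              ENNReal.div_le_of_le_mul (by simpa using h2j)
            rw [min_eq_left ha, min_eq_left hb, min_eq_left hq, hsplit,
              ENNReal.add_sub_cancel_left hfin, hkey, hdd]
          · push_neg at hj2
            have hj2' : 2 ^ n ≤ j := by omega
            have hja : (2 : ℝ≥0∞) ^ n ≤ (j : ℝ≥0∞) := by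
              have : ((2 ^ n : ℕ) : ℝ≥0∞) ≤ ((j : ℕ) : ℝ≥0∞) := by exact_mod_cast hj2'
              simpa [Nat.cast_pow] using this
            have ha : (1 : ℝ≥0∞) ≤ (j : ℝ≥0∞) / 2 ^ n := by
              rw [ENNReal.le_div_iff_mul_le (Or.inl h2n) (Or.inl h2nt), one_mul]
              exact hja
            have hb : (1 : ℝ≥0∞) ≤ (((j + 1) : ℕ) : ℝ≥0∞) / 2 ^ n := by
              refine le_trans ha (ENNReal.div_le_div_right ?_ _)
              exact_mod_cast Nat.le_succ j
            have h2s : (2 : ℝ≥0∞) ^ (n + 1) ≠ 0 := by positivity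
            have h2st : (2 : ℝ≥0∞) ^ (n + 1) ≠ ⊤ := (ENNReal.pow_lt_top (by norm_num)).ne
            have hnat : 2 ^ (n + 1) ≤ 2 * j + 1 := by
              have h2 : 2 ^ (n + 1) = 2 * 2 ^ n := by ring
              omega
            have hc : (1 : ℝ≥0∞) ≤ ((2 * j + 1 : ℕ) : ℝ≥0∞) / 2 ^ (n + 1) := by
              rw [ENNReal.le_div_iff_mul_le (Or.inl h2s) (Or.inl h2st), one_mul]
              have : ((2 ^ (n + 1) : ℕ) : ℝ≥0∞) ≤ ((2 * j + 1 : ℕ) : ℝ≥0∞) := by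
                exact_mod_cast hnat
              simpa [Nat.cast_pow] using this
            rw [min_eq_right ha, min_eq_right hb, min_eq_right hc]
            simp
  refine ⟨A, (fun n => (hinv n).1), (fun n => (hinv n).2.1), (fun n => (hinv n).2.2.1),
    fun n k => ?_, (fun n => (hinv n).2.2.2)⟩
  rw [hAsucc, hse]


lemma exists_uniform (hP : Atomless P) :
    ∃ U : Ω → ℝ, Measurable U ∧ P.map U = volume.restrict (Ioc (0 : ℝ) 1) := by
  classical
  obtain ⟨A, hm, hmono, huniv, hcoh, hmeas⟩ := dyadic_family hP
  have hmono' : ∀ n j k, j ≤ k → A n j ⊆ A n k := by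
    intro n j k hjk
    induction k with
    | zero => rw [Nat.le_zero.1 hjk]
    | succ k ih =>
      rcases Nat.lt_or_ge j (k + 1) with h | h
      · exact (ih (by omega)).trans (hmono n k)
      · have : j = k + 1 := by omega
        rw [this]
  set N : ℕ → Ω → ℕ := fun n ω => sInf {k | ω ∈ A n k} with hN
  have hne : ∀ n ω, (2 ^ n) ∈ {k | ω ∈ A n k} := by
    intro n ω
    have := huniv n (2 ^ n) le_rfl
    simp [this]
  have hNle : ∀ n ω k, N n ω ≤ k ↔ ω ∈ A n k := by
    intro n ω k
    constructor
    · intro h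
      have hmem : ω ∈ A n (N n ω) := Nat.sInf_mem ⟨2 ^ n, hne n ω⟩
      exact hmono' n _ k h hmem
    · intro h
      exact Nat.sInf_le h
  have hNmeas : ∀ n, Measurable (N n) := by
    intro n
    refine measurable_to_countable' fun k => ?_
    match k with
    | 0 =>
      have : N n ⁻¹' {0} = A n 0 := by
        ext ω
        simp only [mem_preimage, mem_singleton_iff, ← Nat.le_zero, hNle]
      rw [this]; exact hm n 0
    | (k + 1) =>
      have : N n ⁻¹' {k + 1} = A n (k + 1) \ A n k := by
        ext ω
        simp only [mem_preimage, mem_singleton_iff, mem_diff, ← hNle, ← not_le]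
        omega
      rw [this]; exact (hm n (k + 1)).diff (hm n k)
  set U : ℕ → Ω → ℝ := fun n ω => (N n ω : ℝ) / 2 ^ n with hU
  have hUmeas : ∀ n, Measurable (U n) := by
    intro n
    exact (measurable_from_top.comp (hNmeas n)).div_const _
  have hUnneg : ∀ n ω, 0 ≤ U n ω := by intro n ω; positivity
  have hUle : ∀ (n k : ℕ) (ω : Ω), U n ω ≤ (k : ℝ) / 2 ^ n ↔ ω ∈ A n k := by
    intro n k ω
    rw [hU]
    rw [div_le_div_iff_of_pos_right (by positivity : (0:ℝ) < 2 ^ n), Nat.cast_le, hNle]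
  have hUanti : ∀ ω, Antitone fun n => U n ω := by
    intro ω
    refine antitone_nat_of_succ_le fun n => ?_
    have h1 : ω ∈ A (n + 1) (2 * N n ω) := by
      rw [hcoh]
      exact Nat.sInf_mem ⟨2 ^ n, hne n ω⟩
    have h2 : N (n + 1) ω ≤ 2 * N n ω := (hNle _ _ _).2 h1
    have h3 : ((N (n + 1) ω : ℝ)) ≤ (2 * N n ω : ℝ) := by exact_mod_cast h2
    have : U (n + 1) ω ≤ (2 * N n ω : ℝ) / 2 ^ (n + 1) := by
      have he : U (n + 1) ω = (N (n + 1) ω : ℝ) / 2 ^ (n + 1) := rfl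
      rw [he]
      gcongr
    refine this.trans (le_of_eq ?_)
    rw [pow_succ, mul_comm ((2:ℝ) ^ n) 2, mul_div_mul_left _ _ (two_ne_zero)]
  set UU : Ω → ℝ := fun ω => ⨅ n, U n ω with hUU
  have hbdd : ∀ ω, BddBelow (range fun n => U n ω) :=
    fun ω => ⟨0, by rintro y ⟨n, rfl⟩; exact hUnneg n ω⟩
  have hUUle : ∀ ω n, UU ω ≤ U n ω := fun ω n => ciInf_le (hbdd ω) n
  have hUU0 : ∀ ω, 0 ≤ UU ω := fun ω => le_ciInf fun n => hUnneg n ω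
  have htend : ∀ ω, Tendsto (fun n => U n ω) atTop (𝓝 (UU ω)) :=
    fun ω => tendsto_atTop_ciInf (hUanti ω) (hbdd ω)
  have hUUmeas : Measurable UU :=
    measurable_of_tendsto_metrizable hUmeas (tendsto_pi_nhds.2 htend)
  -- the sublevel sets
  have hsub : ∀ x : ℝ, {ω | UU ω < x} = ⋃ n, {ω | U n ω < x} := by
    intro x
    ext ω
    simp only [mem_setOf_eq, mem_iUnion]
    constructor
    · intro h
      exact exists_lt_of_ciInf_lt h
    · rintro ⟨n, hn⟩
      exact lt_of_le_of_lt (hUUle ω n) hn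
  have hsubmono : ∀ x : ℝ, Monotone fun n => {ω | U n ω < x} := by
    intro x n m hnm
    intro ω hω
    exact lt_of_le_of_lt (hUanti ω hnm) hω
  -- upper bound
  have hup1 : ∀ (n : ℕ) (x : ℝ), 0 < x → P {ω | U n ω < x} ≤ ENNReal.ofReal x := by
    intro n x hx
    set y := x * 2 ^ n with hy
    have hy0 : 0 < y := by positivity
    set k := ⌈y⌉₊ - 1 with hk
    have hsub2 : {ω | U n ω < x} ⊆ A n k := by
      intro ω hω
      rw [← hUle n k ω]
      have h1 : (N n ω : ℝ) < y := by
        have := hω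
        simp only [mem_setOf_eq, hU] at this
        rw [div_lt_iff₀ (by positivity : (0:ℝ) < 2 ^ n)] at this
        exact this
      have h2 : N n ω < ⌈y⌉₊ := Nat.lt_ceil.2 h1
      have h3 : N n ω ≤ k := by omega
      calc U n ω ≤ (N n ω : ℝ) / 2 ^ n := le_of_eq rfl
        _ ≤ (k : ℝ) / 2 ^ n := by
            have h4 : (N n ω : ℝ) ≤ (k : ℝ) := by exact_mod_cast h3
            gcongr
    have hkx : (k : ℝ) / 2 ^ n ≤ x := by
      have h1 : (k : ℝ) < y := by
        rcases Nat.eq_zero_or_pos ⌈y⌉₊ with h | h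
        · simp [hk, h, hy0]
        · have : (k : ℝ) = (⌈y⌉₊ : ℝ) - 1 := by
            rw [hk]
            push_cast [h]
            ring
          rw [this]
          have := Nat.ceil_lt_add_one hy0.le (R := ℝ)
          linarith
      rw [div_le_iff₀ (by positivity : (0:ℝ) < 2 ^ n)]
      rw [hy] at h1
      linarith
    calc P {ω | U n ω < x} ≤ P (A n k) := measure_mono hsub2
      _ = min ((k : ℝ≥0∞) / 2 ^ n) 1 := hmeas n k
      _ ≤ (k : ℝ≥0∞) / 2 ^ n := min_le_left _ _
      _ = ENNReal.ofReal ((k : ℝ) / 2 ^ n) := by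
          rw [ENNReal.ofReal_div_of_pos (by positivity), ENNReal.ofReal_natCast,
            ENNReal.ofReal_pow (by norm_num), ENNReal.ofReal_ofNat]
      _ ≤ ENNReal.ofReal x := ENNReal.ofReal_le_ofReal hkx
  have hup : ∀ x : ℝ, 0 < x → P {ω | UU ω < x} ≤ ENNReal.ofReal x := by
    intro x hx
    rw [hsub x, (hsubmono x).directed_le.measure_iUnion]
    exact iSup_le fun n => hup1 n x hx
  -- lower bound
  have hlow : ∀ x : ℝ, 0 < x → x ≤ 1 → ENNReal.ofReal x ≤ P {ω | UU ω < x} := by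
    intro x hx hx1
    refine ENNReal.le_of_forall_pos_le_add fun ε hε hfin => ?_
    obtain ⟨n, hn⟩ := exists_pow_lt_of_lt_one (show (0:ℝ) < ε/2 by positivity)
      (show (1:ℝ)/2 < 1 by norm_num)
    set y := x * 2 ^ n with hy
    have hy0 : 0 < y := by positivity
    set k := ⌊y⌋₊ - 1 with hk
    have hky : (k : ℝ) < y := by
      rcases Nat.eq_zero_or_pos ⌊y⌋₊ with h | h
      · simp [hk, h, hy0]
      · have hke : (k : ℝ) = (⌊y⌋₊ : ℝ) - 1 := by
          rw [hk]; push_cast [h]; ring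
        have : (⌊y⌋₊ : ℝ) ≤ y := Nat.floor_le hy0.le
        rw [hke]
        linarith
    have hk2 : y - 2 ≤ (k : ℝ) := by
      rcases Nat.eq_zero_or_pos ⌊y⌋₊ with h | h
      · have : y < 1 := by
          by_contra hc
          push_neg at hc
          have := Nat.floor_pos.2 hc
          omega
        simp only [hk, h]
        norm_num
        linarith
      · have hke : (k : ℝ) = (⌊y⌋₊ : ℝ) - 1 := by
          rw [hk]; push_cast [h]; ring
        have := Nat.lt_floor_add_one y
        rw [hke]
        linarith
    have hAsub : A n k ⊆ {ω | UU ω < x} := by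
      intro ω hω
      have h1 : U n ω ≤ (k : ℝ) / 2 ^ n := (hUle n k ω).2 hω
      have h2 : (k : ℝ) / 2 ^ n < x := by
        rw [div_lt_iff₀ (by positivity : (0:ℝ) < 2 ^ n)]
        rw [hy] at hky
        linarith
      exact lt_of_le_of_lt ((hUUle ω n).trans h1) h2
    have hkle : (k : ℝ≥0∞) / 2 ^ n ≤ 1 := by
      refine ENNReal.div_le_of_le_mul ?_
      rw [one_mul]
      have h1 : (k : ℝ) ≤ 2 ^ n := by
        have : y ≤ 2 ^ n := by
          rw [hy]
          nlinarith [pow_pos (show (0:ℝ) < 2 by norm_num) n]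
        linarith
      have h2 : k ≤ 2 ^ n := by exact_mod_cast h1
      have : ((k : ℕ) : ℝ≥0∞) ≤ ((2 ^ n : ℕ) : ℝ≥0∞) := by exact_mod_cast h2
      simpa [Nat.cast_pow] using this
    have hP1 : P (A n k) = (k : ℝ≥0∞) / 2 ^ n := by
      rw [hmeas n k, min_eq_left hkle]
    have hofr : ENNReal.ofReal ((k : ℝ) / 2 ^ n) = (k : ℝ≥0∞) / 2 ^ n := by
      rw [ENNReal.ofReal_div_of_pos (by positivity), ENNReal.ofReal_natCast,
        ENNReal.ofReal_pow (by norm_num), ENNReal.ofReal_ofNat]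
    have hxk : x - ε ≤ (k : ℝ) / 2 ^ n := by
      have h2n : (2:ℝ) / 2 ^ n < ε := by
        have : (1/2 : ℝ) ^ n = 1 / 2 ^ n := by
          rw [div_pow, one_pow]
        rw [this] at hn
        rw [div_lt_iff₀ (by positivity : (0:ℝ) < 2 ^ n)] at hn ⊢
        linarith
      rw [le_div_iff₀ (by positivity : (0:ℝ) < 2 ^ n)]
      rw [hy] at hk2
      have hh : (x - ε) * 2 ^ n ≤ x * 2 ^ n - 2 := by
        have := (div_lt_iff₀ (by positivity : (0:ℝ) < 2 ^ n)).1 h2n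
        nlinarith [pow_pos (show (0:ℝ) < 2 by norm_num) n]
      linarith
    calc ENNReal.ofReal x ≤ ENNReal.ofReal ((x - ε) + ε) := by
          apply ENNReal.ofReal_le_ofReal
          linarith
      _ ≤ ENNReal.ofReal (x - ε) + ENNReal.ofReal ε := ENNReal.ofReal_add_le
      _ ≤ P (A n k) + ε := by
          have h5 : ENNReal.ofReal (x - ε) ≤ P (A n k) := by
            rw [hP1, ← hofr]
            exact ENNReal.ofReal_le_ofReal (by linarith [hxk])
          have h6 : ENNReal.ofReal (ε : ℝ) = (ε : ℝ≥0∞) := ENNReal.ofReal_coe_nnreal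
          rw [← h6]
          exact add_le_add h5 le_rfl
      _ ≤ P {ω | UU ω < x} + ε := add_le_add (measure_mono hAsub) le_rfl
  -- combine: distribution of UU
  have hlt : ∀ x : ℝ, 0 < x → x ≤ 1 → P {ω | UU ω < x} = ENNReal.ofReal x :=
    fun x h1 h2 => le_antisymm (hup x h1) (hlow x h1 h2)
  have hle : ∀ x : ℝ, P {ω | UU ω ≤ x} = ENNReal.ofReal (min x 1) := by
    intro x
    rcases lt_or_ge x 0 with hx | hx
    · have hemp : {ω | UU ω ≤ x} = ∅ := by
        ext ω
        simp only [mem_setOf_eq, mem_empty_iff_false, iff_false, not_le]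
        exact lt_of_lt_of_le hx (hUU0 ω)
      rw [hemp, measure_empty, min_eq_left (by linarith : x ≤ (1:ℝ))]
      exact (ENNReal.ofReal_eq_zero.2 hx.le).symm
    · rcases le_or_gt 1 x with hx1 | hx1
      · have h1 : P {ω | UU ω ≤ x} ≤ 1 := prob_le_one
        have h2 : (1 : ℝ≥0∞) ≤ P {ω | UU ω ≤ x} := by
          have := hlow 1 one_pos le_rfl
          simp only [ENNReal.ofReal_one] at this
          refine this.trans (measure_mono fun ω hω => ?_)
          simp only [mem_setOf_eq] at hω ⊢
          linarith
        rw [min_eq_right hx1, ENNReal.ofReal_one]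
        exact le_antisymm h1 h2
      · rw [min_eq_left hx1.le]
        refine le_antisymm ?_ ?_
        · refine ENNReal.le_of_forall_pos_le_add fun ε hε hfin => ?_
          set δ := min (ε : ℝ) ((1 - x)/2) with hδ
          have hδ0 : 0 < δ := by
            apply lt_min
            · exact_mod_cast hε
            · linarith
          have hδ1 : x + δ ≤ 1 := by
            have : δ ≤ (1 - x)/2 := min_le_right _ _
            linarith
          calc P {ω | UU ω ≤ x} ≤ P {ω | UU ω < x + δ} := by
                refine measure_mono fun ω hω => ?_
                simp only [mem_setOf_eq] at hω ⊢
                linarith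
            _ = ENNReal.ofReal (x + δ) := hlt _ (by linarith) hδ1
            _ ≤ ENNReal.ofReal x + ENNReal.ofReal δ := ENNReal.ofReal_add_le
            _ ≤ ENNReal.ofReal x + ε := by
                gcongr
                calc ENNReal.ofReal δ ≤ ENNReal.ofReal (ε : ℝ) :=
                      ENNReal.ofReal_le_ofReal (min_le_left _ _)
                  _ = ε := by simp [ENNReal.ofReal_coe_nnreal]
        · rcases eq_or_lt_of_le hx with h0 | h0
          · simp [← h0]
          · refine (le_of_eq (hlt x h0 hx1.le).symm).trans (measure_mono fun ω hω => ?_)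
            simp only [mem_setOf_eq] at hω ⊢
            exact hω.le
  -- conclusion
  refine ⟨UU, hUUmeas, ?_⟩
  refine Measure.ext_of_Iic (P.map UU) _ fun x => ?_
  rw [Measure.map_apply hUUmeas measurableSet_Iic]
  rw [Measure.restrict_apply measurableSet_Iic]
  have h1 : UU ⁻¹' Iic x = {ω | UU ω ≤ x} := rfl
  have h2 : Iic x ∩ Ioc (0:ℝ) 1 = Ioc 0 (min 1 x) := by
    rw [inter_comm, Ioc_inter_Iic]
  rw [h1, h2, hle x, Real.volume_Ioc]
  rw [min_comm]
  congr 1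
  ring_nf


lemma cdf_congr {X X' : Ω → ℝ} (h : X =ᵐ[P] X') : cdfRV P X = cdfRV P X' := by
  funext η
  unfold cdfRV
  congr 1
  apply measure_congr
  filter_upwards [h] with ω hω
  show (X ω ≤ η) = (X' ω ≤ η)
  rw [hω]

lemma qf_congr {X X' : Ω → ℝ} (h : X =ᵐ[P] X') : qf P X = qf P X' := by
  unfold qf
  rw [cdf_congr h]

lemma cdf_nonneg (W : Ω → ℝ) (η : ℝ) : 0 ≤ cdfRV P W η := ENNReal.toReal_nonneg

lemma cdf_le_one (W : Ω → ℝ) (η : ℝ) : cdfRV P W η ≤ 1 := by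
  unfold cdfRV
  rw [show (1:ℝ) = (1 : ℝ≥0∞).toReal by simp]
  exact ENNReal.toReal_mono ENNReal.one_ne_top prob_le_one

lemma cdf_mono (W : Ω → ℝ) : Monotone (cdfRV P W) := by
  intro a b hab
  unfold cdfRV
  refine ENNReal.toReal_mono (measure_ne_top P _) (measure_mono fun ω hω => ?_)
  simp only [mem_setOf_eq] at hω ⊢
  linarith

lemma cdf_exists_ge (W : Ω → ℝ) (hWm : Measurable W) {p : ℝ} (hp : p < 1) :
    ∃ η, p ≤ cdfRV P W η := by
  have hmono : Monotone fun n : ℕ => {ω | W ω ≤ (n : ℝ)} := by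
    intro a b hab ω hω
    simp only [mem_setOf_eq] at hω ⊢
    calc W ω ≤ (a : ℝ) := hω
      _ ≤ (b : ℝ) := by exact_mod_cast hab
  have huniv : ⋃ n : ℕ, {ω | W ω ≤ (n : ℝ)} = univ := by
    ext ω
    simp only [mem_iUnion, mem_setOf_eq, mem_univ, iff_true]
    obtain ⟨n, hn⟩ := exists_nat_ge (W ω)
    exact ⟨n, hn⟩
  have h1 : Tendsto (fun n : ℕ => P {ω | W ω ≤ (n : ℝ)}) atTop (𝓝 (P univ)) := by
    rw [← huniv]
    exact tendsto_measure_iUnion_atTop hmono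
  rw [measure_univ] at h1
  have h2 : Tendsto (fun n : ℕ => cdfRV P W n) atTop (𝓝 1) := by
    have := (ENNReal.tendsto_toReal ENNReal.one_ne_top).comp h1
    simpa [cdfRV, Function.comp_def] using this
  obtain ⟨n, hn⟩ := (h2.eventually (eventually_gt_nhds hp)).exists
  exact ⟨n, hn.le⟩

lemma cdf_exists_lt (W : Ω → ℝ) (hWm : Measurable W) {p : ℝ} (hp : 0 < p) :
    ∃ η, cdfRV P W η < p := by
  have hanti : Antitone fun n : ℕ => {ω | W ω ≤ -(n : ℝ)} := by
    intro a b hab ω hω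
    simp only [mem_setOf_eq] at hω ⊢
    have : (a : ℝ) ≤ (b : ℝ) := by exact_mod_cast hab
    linarith
  have hempty : ⋂ n : ℕ, {ω | W ω ≤ -(n : ℝ)} = ∅ := by
    ext ω
    simp only [mem_iInter, mem_setOf_eq, mem_empty_iff_false, iff_false, not_forall, not_le]
    obtain ⟨n, hn⟩ := exists_nat_gt (-W ω)
    exact ⟨n, by linarith⟩
  have h1 : Tendsto (fun n : ℕ => P {ω | W ω ≤ -(n : ℝ)}) atTop (𝓝 0) := by
    have := tendsto_measure_iInter_atTop (μ := P) (s := fun n : ℕ => {ω | W ω ≤ -(n:ℝ)})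
      (fun n => (hWm measurableSet_Iic).nullMeasurableSet) hanti ⟨0, measure_ne_top P _⟩
    rw [hempty] at this
    simpa [Function.comp_def] using this
  have h2 : Tendsto (fun n : ℕ => cdfRV P W (-(n:ℝ))) atTop (𝓝 0) := by
    have := (ENNReal.tendsto_toReal ENNReal.zero_ne_top).comp h1
    simpa [cdfRV, Function.comp_def] using this
  obtain ⟨n, hn⟩ := (h2.eventually (eventually_lt_nhds hp)).exists
  exact ⟨-(n:ℝ), hn⟩

lemma qf_set_nonempty (W : Ω → ℝ) (hWm : Measurable W) {p : ℝ} (hp : p < 1) :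
    {η : ℝ | p ≤ cdfRV P W η}.Nonempty :=
  (cdf_exists_ge (P := P) W hWm hp).imp fun _ h => h

lemma qf_set_bddBelow (W : Ω → ℝ) (hWm : Measurable W) {p : ℝ} (hp : 0 < p) :
    BddBelow {η : ℝ | p ≤ cdfRV P W η} := by
  obtain ⟨η₀, hη₀⟩ := cdf_exists_lt (P := P) W hWm hp
  refine ⟨η₀, fun η hη => ?_⟩
  by_contra hc
  push_neg at hc
  exact absurd (le_trans hη (cdf_mono W hc.le)) (not_le.2 hη₀)

lemma cdf_qf_ge (W : Ω → ℝ) (hWm : Measurable W) {p : ℝ} (hp0 : 0 < p) (hp1 : p < 1) :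
    p ≤ cdfRV P W (qf P W p) := by
  set q := qf P W p with hq
  have hne := qf_set_nonempty (P := P) W hWm hp1
  have hbdd := qf_set_bddBelow (P := P) W hWm hp0
  have step : ∀ n : ℕ, p ≤ cdfRV P W (q + 1/(n+1)) := by
    intro n
    have hlt : sInf {η : ℝ | p ≤ cdfRV P W η} < q + 1/(n+1) := by
      rw [show sInf {η : ℝ | p ≤ cdfRV P W η} = q from hq.symm]
      have : (0:ℝ) < 1/(n+1) := by positivity
      linarith
    obtain ⟨η, hη, hη2⟩ := (csInf_lt_iff hbdd hne).1 hlt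
    exact le_trans hη (cdf_mono W hη2.le)
  have hinter : ⋂ n : ℕ, {ω | W ω ≤ q + 1/(n+1)} = {ω | W ω ≤ q} := by
    ext ω
    simp only [mem_iInter, mem_setOf_eq]
    constructor
    · intro h
      by_contra hc
      push_neg at hc
      obtain ⟨n, hn⟩ := exists_nat_one_div_lt (show 0 < W ω - q by linarith)
      have := h n
      have hcast : (1:ℝ)/(n+1) = 1/((n:ℝ)+1) := by norm_num
      linarith [hn]
    · intro h n
      have : (0:ℝ) < 1/(n+1) := by positivity
      linarith
  have hanti : Antitone fun n : ℕ => {ω | W ω ≤ q + 1/(n+1)} := by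
    intro a b hab ω hω
    simp only [mem_setOf_eq] at hω ⊢
    have h1 : (1:ℝ)/(b+1) ≤ 1/(a+1) := by
      apply one_div_le_one_div_of_le
      · positivity
      · have : (a:ℝ) ≤ b := by exact_mod_cast hab
        linarith
    linarith
  have h1 : Tendsto (fun n : ℕ => P {ω | W ω ≤ q + 1/(n+1)}) atTop (𝓝 (P {ω | W ω ≤ q})) := by
    have := tendsto_measure_iInter_atTop (μ := P)
      (s := fun n : ℕ => {ω | W ω ≤ q + 1/(n+1)})
      (fun n => (hWm measurableSet_Iic).nullMeasurableSet) hanti ⟨0, measure_ne_top P _⟩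
    rwa [hinter] at this
  have h2 : Tendsto (fun n : ℕ => cdfRV P W (q + 1/(n+1))) atTop (𝓝 (cdfRV P W q)) := by
    have := (ENNReal.tendsto_toReal (measure_ne_top P _)).comp h1
    simpa [cdfRV, Function.comp_def] using this
  exact ge_of_tendsto' h2 step

/-- The Galois connection between quantile and cdf. -/
lemma qf_le_iff (W : Ω → ℝ) (hWm : Measurable W) {p : ℝ} (hp0 : 0 < p) (hp1 : p < 1) (η : ℝ) :
    qf P W p ≤ η ↔ p ≤ cdfRV P W η := by
  constructor
  · intro h
    exact le_trans (cdf_qf_ge W hWm hp0 hp1) (cdf_mono W h)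
  · intro h
    exact csInf_le (qf_set_bddBelow W hWm hp0) h

/-- The set `{η | p ≤ F(η)}` is the closed ray above the quantile. -/
lemma qf_set_eq_Ici (W : Ω → ℝ) (hWm : Measurable W) {p : ℝ} (hp0 : 0 < p) (hp1 : p < 1) :
    {η : ℝ | p ≤ cdfRV P W η} = Ici (qf P W p) := by
  ext η
  simp only [mem_setOf_eq, mem_Ici]
  exact (qf_le_iff W hWm hp0 hp1 η).symm


/-- A measurable version of the quantile function, clamped to `(0,1)`. -/
def Qm {Ω : Type*} [MeasurableSpace Ω] (P : Measure Ω) (W : Ω → ℝ) : ℝ → ℝ :=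
  fun p => if p ∈ Ioo (0:ℝ) 1 then qf P W p else 0

lemma Qm_eq_qf {W : Ω → ℝ} {p : ℝ} (hp : p ∈ Ioo (0:ℝ) 1) : Qm P W p = qf P W p := by
  simp [Qm, hp]

lemma Qm_measurable (W : Ω → ℝ) (hWm : Measurable W) : Measurable (Qm P W) := by
  refine measurable_of_Iic fun x => ?_
  have hpre : Qm P W ⁻¹' Iic x =
      (Ioo (0:ℝ) 1 ∩ Iic (cdfRV P W x)) ∪ (if 0 ≤ x then (Ioo (0:ℝ) 1)ᶜ else ∅) := by
    ext p
    by_cases hp : p ∈ Ioo (0:ℝ) 1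
    · rw [mem_preimage, mem_Iic, Qm_eq_qf hp, qf_le_iff W hWm hp.1 hp.2 x]
      simp only [mem_union, mem_inter_iff, hp, true_and, mem_Iic]
      constructor
      · exact Or.inl
      · rintro (h | h)
        · exact h
        · split_ifs at h with h0
          · exact absurd hp h
          · exact absurd h (notMem_empty p)
    · have hq0 : Qm P W p = 0 := by simp [Qm, hp]
      rw [mem_preimage, mem_Iic, hq0]
      simp only [mem_union, mem_inter_iff, hp, false_and, false_or]
      split_ifs with h0
      · simp [hp, h0]
      · simp [h0]
  rw [hpre]
  refine MeasurableSet.union (measurableSet_Ioo.inter measurableSet_Iic) ?_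
  split_ifs
  · exact measurableSet_Ioo.compl
  · exact MeasurableSet.empty

instance : IsProbabilityMeasure (volume.restrict (Ioc (0:ℝ) 1)) := by
  constructor
  simp

/-- The quantile transform has the same law as `W`. -/
lemma qm_law (W : Ω → ℝ) (hWm : Measurable W) :
    (volume.restrict (Ioc (0:ℝ) 1)).map (Qm P W) = P.map W := by
  have hQm := Qm_measurable (P := P) W hWm
  refine Measure.ext_of_Iic _ _ fun x => ?_
  rw [Measure.map_apply hQm measurableSet_Iic, Measure.map_apply hWm measurableSet_Iic,
    Measure.restrict_apply (hQm measurableSet_Iic)]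
  have hnull : volume (Qm P W ⁻¹' Iic x ∩ Ioc (0:ℝ) 1)
      = volume (Qm P W ⁻¹' Iic x ∩ Ioo (0:ℝ) 1) := by
    apply le_antisymm
    · have hsub : Qm P W ⁻¹' Iic x ∩ Ioc (0:ℝ) 1
          ⊆ (Qm P W ⁻¹' Iic x ∩ Ioo (0:ℝ) 1) ∪ {1} := by
        rintro p ⟨h1, h2, h3⟩
        rcases eq_or_lt_of_le h3 with he | hlt
        · exact Or.inr (by simp [he])
        · exact Or.inl ⟨h1, h2, hlt⟩
      calc volume (Qm P W ⁻¹' Iic x ∩ Ioc (0:ℝ) 1)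
          ≤ volume ((Qm P W ⁻¹' Iic x ∩ Ioo (0:ℝ) 1) ∪ {1}) := measure_mono hsub
        _ ≤ volume (Qm P W ⁻¹' Iic x ∩ Ioo (0:ℝ) 1) + volume ({1} : Set ℝ) :=
            measure_union_le _ _
        _ = volume (Qm P W ⁻¹' Iic x ∩ Ioo (0:ℝ) 1) := by simp
    · exact measure_mono (inter_subset_inter_right _ Ioo_subset_Ioc_self)
  rw [hnull]
  have hset : Qm P W ⁻¹' Iic x ∩ Ioo (0:ℝ) 1 = Ioo (0:ℝ) 1 ∩ Iic (cdfRV P W x) := by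
    ext p
    constructor
    · rintro ⟨h1, h2⟩
      refine ⟨h2, ?_⟩
      have hq : qf P W p ≤ x := by
        have := h1
        rwa [mem_preimage, mem_Iic, Qm_eq_qf h2] at this
      exact (qf_le_iff W hWm h2.1 h2.2 x).1 hq
    · rintro ⟨h2, h1⟩
      refine ⟨?_, h2⟩
      rw [mem_preimage, mem_Iic, Qm_eq_qf h2]
      exact (qf_le_iff W hWm h2.1 h2.2 x).2 h1
  rw [hset]
  have hWx : P (W ⁻¹' Iic x) = ENNReal.ofReal (cdfRV P W x) :=
    (ENNReal.ofReal_toReal (measure_ne_top P _)).symm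
  rw [hWx]
  have hF0 : 0 ≤ cdfRV P W x := cdf_nonneg W x
  rcases lt_or_ge (cdfRV P W x) 1 with hc | hc
  · have heq : Ioo (0:ℝ) 1 ∩ Iic (cdfRV P W x) = Ioc 0 (cdfRV P W x) := by
      ext p
      simp only [mem_inter_iff, mem_Ioo, mem_Iic, mem_Ioc]
      constructor
      · rintro ⟨⟨h1, h2⟩, h3⟩; exact ⟨h1, h3⟩
      · rintro ⟨h1, h3⟩; exact ⟨⟨h1, lt_of_le_of_lt h3 hc⟩, h3⟩
    rw [heq, Real.volume_Ioc]
    congr 1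
    ring
  · have hF1 : cdfRV P W x = 1 := le_antisymm (cdf_le_one W x) hc
    have heq : Ioo (0:ℝ) 1 ∩ Iic (cdfRV P W x) = Ioo (0:ℝ) 1 := by
      rw [hF1]
      ext p
      simp only [mem_inter_iff, mem_Ioo, mem_Iic, and_iff_left_iff_imp]
      rintro ⟨h1, h2⟩
      exact h2.le
    rw [heq, hF1, Real.volume_Ioo]
    simp

lemma qm_integrable (W : Ω → ℝ) (hWm : Measurable W) (hW : Integrable W P) :
    Integrable (Qm P W) (volume.restrict (Ioc (0:ℝ) 1)) := by
  have h1 : Integrable id (P.map W) :=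
    (integrable_map_measure aestronglyMeasurable_id hWm.aemeasurable).2
      (by simpa [Function.comp_def] using hW)
  rw [← qm_law W hWm] at h1
  have h2 := (integrable_map_measure aestronglyMeasurable_id
    (Qm_measurable W hWm).aemeasurable).1 h1
  simpa [Function.comp_def] using h2

lemma qm_integral_comp (W : Ω → ℝ) (hWm : Measurable W) (g : ℝ → ℝ) (hg : Measurable g) :
    ∫ ω, g (W ω) ∂P = ∫ p in Ioc (0:ℝ) 1, g (Qm P W p) := by
  rw [← integral_map hWm.aemeasurable hg.aestronglyMeasurable,
      ← qm_law W hWm,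
      integral_map (Qm_measurable W hWm).aemeasurable hg.aestronglyMeasurable]



lemma restrict_eq_Ioo {S : Set ℝ} (hS : MeasurableSet S) :
    volume.restrict (Ioc (0:ℝ) 1) S = volume (S ∩ Ioo (0:ℝ) 1) := by
  rw [Measure.restrict_apply hS]
  apply le_antisymm
  · have hsub : S ∩ Ioc (0:ℝ) 1 ⊆ (S ∩ Ioo (0:ℝ) 1) ∪ {1} := by
      rintro p ⟨h1, h2, h3⟩
      rcases eq_or_lt_of_le h3 with he | hlt
      · exact Or.inr (by simp [he])
      · exact Or.inl ⟨h1, h2, hlt⟩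
    calc volume (S ∩ Ioc (0:ℝ) 1) ≤ volume ((S ∩ Ioo (0:ℝ) 1) ∪ {1}) := measure_mono hsub
      _ ≤ volume (S ∩ Ioo (0:ℝ) 1) + volume ({1} : Set ℝ) := measure_union_le _ _
      _ = volume (S ∩ Ioo (0:ℝ) 1) := by simp
  · exact measure_mono (inter_subset_inter_right _ Ioo_subset_Ioc_self)

lemma vol_Ioo_Iic {c : ℝ} (h0 : 0 ≤ c) (h1 : c ≤ 1) :
    volume (Ioo (0:ℝ) 1 ∩ Iic c) = ENNReal.ofReal c := by
  rcases lt_or_ge c 1 with hc | hc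
  · have heq : Ioo (0:ℝ) 1 ∩ Iic c = Ioc 0 c := by
      ext p
      simp only [mem_inter_iff, mem_Ioo, mem_Iic, mem_Ioc]
      constructor
      · rintro ⟨⟨hp1, hp2⟩, hp3⟩; exact ⟨hp1, hp3⟩
      · rintro ⟨hp1, hp3⟩; exact ⟨⟨hp1, lt_of_le_of_lt hp3 hc⟩, hp3⟩
    rw [heq, Real.volume_Ioc]
    congr 1
    ring
  · have hc1 : c = 1 := le_antisymm h1 hc
    have heq : Ioo (0:ℝ) 1 ∩ Iic c = Ioo (0:ℝ) 1 := by
      rw [hc1]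
      ext p
      simp only [mem_inter_iff, mem_Ioo, mem_Iic, and_iff_left_iff_imp]
      rintro ⟨hp1, hp2⟩
      exact hp2.le
    rw [heq, Real.volume_Ioo, hc1]
    simp

end Aux

/-- for `r ∈ [1,2)`, any `Z` dominating `Y` in the `r`-th order can be
replaced by `Z̄` dominating `Y` with quantiles above those of `X` and `W₁(X,Z̄) ≤ W₁(X,Z)`. -/
theorem stmt2 {Ω : Type*} [MeasurableSpace Ω] (P : Measure Ω) [IsProbabilityMeasure P]
    (hP : Atomless P) (X Y : Ω → ℝ) (hX : Integrable X P) (hY : Integrable Y P)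
    (r : ℝ) (hr : r ∈ Set.Ico (1:ℝ) 2)
    (Z : Ω → ℝ) (hZ : Integrable Z P) (hZY : domR P Z Y r) :
    ∃ Zb : Ω → ℝ, Integrable Zb P ∧ domR P Zb Y r ∧
      (∀ p ∈ Set.Ioo (0:ℝ) 1, qf P X p ≤ qf P Zb p) ∧
      W1 P X Zb ≤ W1 P X Z := by
  classical
  obtain ⟨X', hX'sm, hXae⟩ : ∃ X', StronglyMeasurable X' ∧ X =ᵐ[P] X' :=
    ⟨hX.1.mk X, hX.1.stronglyMeasurable_mk, hX.1.ae_eq_mk⟩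
  obtain ⟨Z', hZ'sm, hZae⟩ : ∃ Z', StronglyMeasurable Z' ∧ Z =ᵐ[P] Z' :=
    ⟨hZ.1.mk Z, hZ.1.stronglyMeasurable_mk, hZ.1.ae_eq_mk⟩
  have hX'meas : Measurable X' := hX'sm.measurable
  have hZ'meas : Measurable Z' := hZ'sm.measurable
  have hX'i : Integrable X' P := hX.congr hXae
  have hZ'i : Integrable Z' P := hZ.congr hZae
  have hqfX : qf P X = qf P X' := qf_congr hXae
  have hqfZ : qf P Z = qf P Z' := qf_congr hZae
  obtain ⟨U, hUm, hUmap⟩ := exists_uniform hP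
  set lam := volume.restrict (Ioc (0:ℝ) 1) with hlam
  set QX := Qm P X' with hQX
  set QZ := Qm P Z' with hQZ
  set M : ℝ → ℝ := fun p => max (QX p) (QZ p) with hM
  have hQXm : Measurable QX := Qm_measurable (P := P) X' hX'meas
  have hQZm : Measurable QZ := Qm_measurable (P := P) Z' hZ'meas
  have hMm : Measurable M := hQXm.max hQZm
  set Zb : Ω → ℝ := fun ω => M (U ω) with hZb
  have hZbm : Measurable Zb := hMm.comp hUm
  have hQXi : Integrable QX lam := qm_integrable X' hX'meas hX'i
  have hQZi : Integrable QZ lam := qm_integrable Z' hZ'meas hZ'i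
  have hMi : Integrable M lam := by
    refine Integrable.mono' (hQXi.abs.add hQZi.abs) hMm.aestronglyMeasurable ?_
    refine Eventually.of_forall fun p => ?_
    simp only [Real.norm_eq_abs]
    calc |M p| ≤ max |QX p| |QZ p| := abs_max_le_max_abs_abs
      _ ≤ |QX p| + |QZ p| := max_le (le_add_of_nonneg_right (abs_nonneg _))
          (le_add_of_nonneg_left (abs_nonneg _))
  have hZbi : Integrable Zb P := by
    have h1 : Integrable M (P.map U) := by rw [hUmap]; exact hMi
    exact (integrable_map_measure hMm.aestronglyMeasurable hUm.aemeasurable).1 h1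
  -- cdf of Zb
  have hcdfZb : ∀ η, cdfRV P Zb η = min (cdfRV P X' η) (cdfRV P Z' η) := by
    intro η
    have h1 : P {ω | Zb ω ≤ η} = lam (M ⁻¹' Iic η) := by
      rw [← hUmap, Measure.map_apply hUm (hMm measurableSet_Iic)]
      rfl
    have h2 : lam (M ⁻¹' Iic η) = volume ((M ⁻¹' Iic η) ∩ Ioo 0 1) :=
      restrict_eq_Ioo (hMm measurableSet_Iic)
    have h3 : (M ⁻¹' Iic η) ∩ Ioo (0:ℝ) 1
        = Ioo (0:ℝ) 1 ∩ Iic (min (cdfRV P X' η) (cdfRV P Z' η)) := by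
      ext p
      simp only [mem_inter_iff, mem_preimage, mem_Iic, le_min_iff, hM, max_le_iff]
      constructor
      · rintro ⟨⟨ha, hb⟩, hp⟩
        rw [hQX, Qm_eq_qf hp] at ha
        rw [hQZ, Qm_eq_qf hp] at hb
        exact ⟨hp, (qf_le_iff X' hX'meas hp.1 hp.2 η).1 ha,
          (qf_le_iff Z' hZ'meas hp.1 hp.2 η).1 hb⟩
      · rintro ⟨hp, ha, hb⟩
        refine ⟨⟨?_, ?_⟩, hp⟩
        · rw [hQX, Qm_eq_qf hp]
          exact (qf_le_iff X' hX'meas hp.1 hp.2 η).2 ha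
        · rw [hQZ, Qm_eq_qf hp]
          exact (qf_le_iff Z' hZ'meas hp.1 hp.2 η).2 hb
    have h0 : 0 ≤ min (cdfRV P X' η) (cdfRV P Z' η) :=
      le_min (cdf_nonneg _ _) (cdf_nonneg _ _)
    have h1' : min (cdfRV P X' η) (cdfRV P Z' η) ≤ 1 :=
      (min_le_left _ _).trans (cdf_le_one _ _)
    show (P {ω | Zb ω ≤ η}).toReal = _
    rw [h1, h2, h3, vol_Ioo_Iic h0 h1', ENNReal.toReal_ofReal h0]
  -- quantile of Zb
  have hqfZb : ∀ p ∈ Ioo (0:ℝ) 1, qf P Zb p = max (qf P X' p) (qf P Z' p) := by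
    intro p hp
    have hset : {η | p ≤ cdfRV P Zb η} = Ici (qf P X' p) ∩ Ici (qf P Z' p) := by
      ext η
      rw [mem_setOf_eq, hcdfZb η, le_min_iff, mem_inter_iff, mem_Ici, mem_Ici]
      rw [← qf_le_iff X' hX'meas hp.1 hp.2 η, ← qf_le_iff Z' hZ'meas hp.1 hp.2 η]
    show sInf {η | p ≤ cdfRV P Zb η} = _
    rw [hset, Ici_inter_Ici, csInf_Ici]
  have haeIoo : ∀ᵐ p ∂lam, p ∈ Ioo (0:ℝ) 1 := by
    have h1 : ∀ᵐ p : ℝ ∂volume, p ∉ ({1} : Set ℝ) :=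
      compl_mem_ae_iff.2 (by simp)
    rw [hlam, ae_restrict_iff' measurableSet_Ioc]
    filter_upwards [h1] with p hp hpIoc
    exact ⟨hpIoc.1, lt_of_le_of_ne hpIoc.2 (by simpa using hp)⟩
  refine ⟨Zb, hZbi, ?_, ?_, ?_⟩
  · -- domR
    intro η
    have hr1 : 0 ≤ r - 1 := by linarith [hr.1]
    have hΓ : 0 ≤ 1 / Real.Gamma r := by
      have := Real.Gamma_pos_of_pos (lt_of_lt_of_le one_pos hr.1)
      positivity
    set h : ℝ → ℝ := fun z => if z ≤ η then (η - z) ^ (r - 1) else 0 with hh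
    have hhm : Measurable h := by
      refine Measurable.ite measurableSet_Iic ?_ measurable_const
      exact (Real.continuous_rpow_const hr1).measurable.comp
        (measurable_const.sub measurable_id)
    have hhnn : ∀ z, 0 ≤ h z := by
      intro z
      simp only [hh]
      split_ifs with hz
      · exact Real.rpow_nonneg (by linarith) _
      · exact le_rfl
    have hhmono : ∀ a b : ℝ, a ≤ b → h b ≤ h a := by
      intro a b hab
      simp only [hh]
      split_ifs with h1 h2 h2
      · exact Real.rpow_le_rpow (by linarith) (by linarith) hr1
      · exact absurd (hab.trans h1) h2
      · exact Real.rpow_nonneg (by linarith) _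
      · exact le_rfl
    have hhbd : ∀ z, |h z| ≤ 1 + |η| + |z| := by
      intro z
      rw [abs_of_nonneg (hhnn z)]
      simp only [hh]
      split_ifs with h1
      · rcases le_total (η - z) 1 with h2 | h2
        · calc (η - z) ^ (r - 1) ≤ 1 := Real.rpow_le_one (by linarith) h2 hr1
            _ ≤ 1 + |η| + |z| := by
                have := abs_nonneg η
                have := abs_nonneg z
                linarith
        · calc (η - z) ^ (r - 1) ≤ (η - z) ^ (1:ℝ) :=
              Real.rpow_le_rpow_of_exponent_le h2 (by linarith [hr.2])
            _ = η - z := Real.rpow_one _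
            _ ≤ |η| + |z| := by
                have h3 := le_abs_self η
                have h4 := neg_abs_le z
                linarith
            _ ≤ 1 + |η| + |z| := by linarith
      · have := abs_nonneg η
        have := abs_nonneg z
        linarith
    have hI1 : ∫ ω, h (Zb ω) ∂P = ∫ p, h (M p) ∂lam := by
      rw [← hUmap]
      exact (integral_map hUm.aemeasurable (hhm.comp hMm).aestronglyMeasurable).symm
    have hI2 : ∫ ω, h (Z ω) ∂P = ∫ ω, h (Z' ω) ∂P :=
      integral_congr_ae (hZae.mono fun ω hω => by dsimp only; rw [hω])
    have hI3 : ∫ ω, h (Z' ω) ∂P = ∫ p, h (QZ p) ∂lam :=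
      qm_integral_comp Z' hZ'meas h hhm
    have hint : Integrable (fun p => h (QZ p)) lam := by
      refine Integrable.mono' ((integrable_const (1 + |η|)).add hQZi.abs)
        (hhm.comp hQZm).aestronglyMeasurable ?_
      refine Eventually.of_forall fun p => ?_
      simpa [Real.norm_eq_abs] using hhbd (QZ p)
    have hle : ∫ p, h (M p) ∂lam ≤ ∫ p, h (QZ p) ∂lam := by
      refine integral_mono_of_nonneg (Eventually.of_forall fun p => hhnn _) hint
        (Eventually.of_forall fun p => hhmono _ _ (le_max_right _ _))
    have hZbZ : sfr P Zb r η ≤ sfr P Z r η := by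
      unfold sfr
      refine mul_le_mul_of_nonneg_left ?_ hΓ
      have e1 : ∫ ω, (if Zb ω ≤ η then (η - Zb ω) ^ (r - 1) else 0) ∂P
          = ∫ ω, h (Zb ω) ∂P := rfl
      have e2 : ∫ ω, (if Z ω ≤ η then (η - Z ω) ^ (r - 1) else 0) ∂P
          = ∫ ω, h (Z ω) ∂P := rfl
      rw [e1, e2, hI1, hI2, hI3]
      exact hle
    exact hZbZ.trans (hZY η)
  · -- quantile domination
    intro p hp
    rw [hqfX, hqfZb p hp]
    exact le_max_left _ _
  · -- W1 comparison
    unfold W1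
    rw [intervalIntegral.integral_of_le zero_le_one,
      intervalIntegral.integral_of_le zero_le_one]
    have hint2 : Integrable (fun p => |qf P X p - qf P Z p|) lam := by
      refine Integrable.congr (hQXi.sub hQZi).abs ?_
      filter_upwards [haeIoo] with p hp
      simp only [Pi.sub_apply]
      rw [hqfX, hqfZ, hQX, hQZ, Qm_eq_qf hp, Qm_eq_qf hp]
    refine integral_mono_of_nonneg (Eventually.of_forall fun p => abs_nonneg _) hint2 ?_
    filter_upwards [haeIoo] with p hp
    rw [hqfX, hqfZ, hqfZb p hp]
    rcases le_total (qf P X' p) (qf P Z' p) with hc | hc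
    · rw [max_eq_right hc]
    · rw [max_eq_left hc]
      simp [abs_nonneg]

end
end

section
/- Let (Ω, ℱ, P) be an atomless probability space and X, Y ∈ L¹(Ω, ℱ, P). Then dist(X, A₂(Y)) ≥ sup_{p ∈ [0,1]} (F^{(−2)}_Y(p) − F^{(−2)}_X(p)) and also dist(X, A₂(Y)) ≥ sup_{η ∈ ℝ} (F^{(2)}_X(η) − F^{(2)}_Y(η)). -/
open MeasureTheory Filter Set

noncomputable section

/-!
Everything is written through quantile functions on `(0,1)`: by inverse-transform sampling,
`F^{(2)}_Z(η) = ∫₀¹ max (η - F⁻¹_Z(t)) 0 dt`, while `W₁(X, Z) = ∫₀¹ |F⁻¹_X - F⁻¹_Z|`. As `t ↦ max (η - t) 0`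
is 1-Lipschitz, `F^{(2)}_X(η) - F^{(2)}_Z(η) ≤ W₁(X, Z)`, and plainly
`F^{(-2)}_Z(p) - F^{(-2)}_X(p) ≤ W₁(X, Z)`. For `Z ∈ A₂(Y)`, `F^{(2)}_Z ≤ F^{(2)}_Y` turns the first
inequality into the shortfall bound. For the Lorenz bound, `F^{(-2)}_Z(p) = sup_η (p η - F^{(2)}_Z(η))`
(Fenchel duality, the supremum being attained at `η = F⁻¹_Z(p)`), so second-order dominance gives
`F^{(-2)}_Y ≤ F^{(-2)}_Z`.
-/

open ProbabilityTheory Topology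

namespace ProbabilityTheory

def quantile (μ : Measure ℝ) (p : ℝ) : ℝ := sInf {x | p ≤ cdf μ x}

variable {μ : Measure ℝ}

lemma nonempty_setOf_le_cdf {p : ℝ} (hp : p < 1) : {x | p ≤ cdf μ x}.Nonempty :=
  ((tendsto_cdf_atTop μ).eventually (eventually_ge_nhds hp)).exists

lemma bddBelow_setOf_le_cdf {p : ℝ} (hp : 0 < p) : BddBelow {x | p ≤ cdf μ x} := by
  obtain ⟨y, hy⟩ := ((tendsto_cdf_atBot μ).eventually (eventually_lt_nhds hp)).exists
  exact ⟨y, fun x hx => le_of_not_gt fun hxy => (hx.trans (monotone_cdf μ hxy.le)).not_gt hy⟩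

lemma quantile_le_iff {p x : ℝ} (hp : p ∈ Ioo (0:ℝ) 1) : quantile μ p ≤ x ↔ p ≤ cdf μ x := by
  refine ⟨fun h => ?_, fun h => csInf_le (bddBelow_setOf_le_cdf hp.1) h⟩
  have hright : ∀ z, x < z → p ≤ cdf μ z := fun z hz => by
    obtain ⟨y, hy, hyz⟩ := exists_lt_of_csInf_lt (nonempty_setOf_le_cdf hp.2) (h.trans_lt hz)
    exact hy.trans (monotone_cdf μ hyz.le)
  have hcont : Tendsto (cdf μ) (𝓝[>] x) (𝓝 (cdf μ x)) :=
    ((cdf μ).right_continuous x).mono Ioi_subset_Ici_self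
  exact ge_of_tendsto hcont (eventually_mem_nhdsWithin.mono hright)

lemma monotoneOn_quantile : MonotoneOn (quantile μ) (Ioo (0:ℝ) 1) := fun _ hp _ hq hpq =>
  csInf_le_csInf (bddBelow_setOf_le_cdf hp.1) (nonempty_setOf_le_cdf hq.2)
    fun _ hx => hpq.trans hx

lemma aemeasurable_quantile : AEMeasurable (quantile μ) (volume.restrict (Ioo (0:ℝ) 1)) :=
  aemeasurable_restrict_of_monotoneOn measurableSet_Ioo monotoneOn_quantile

variable [IsProbabilityMeasure μ]

lemma map_quantile_uniform : (volume.restrict (Ioo (0:ℝ) 1)).map (quantile μ) = μ := by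
  refine Measure.ext_of_Iic _ _ fun x => ?_
  have hpre : quantile μ ⁻¹' Iic x ∩ Ioo 0 1 = Ioc 0 (cdf μ x) ∩ Ioo 0 1 := by
    ext t
    simp only [mem_inter_iff, mem_preimage, mem_Iic, mem_Ioc, mem_Ioo]
    constructor
    · rintro ⟨h, ht⟩; exact ⟨⟨ht.1, (quantile_le_iff ht).1 h⟩, ht⟩
    · rintro ⟨⟨-, h⟩, ht⟩; exact ⟨(quantile_le_iff ht).2 h, ht⟩
  rw [Measure.map_apply_of_aemeasurable aemeasurable_quantile measurableSet_Iic,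
    Measure.restrict_apply' measurableSet_Ioo, hpre, ← ofReal_cdf μ x]
  rcases (cdf_le_one μ x).lt_or_eq with h1 | h1
  · rw [inter_eq_left.2 (show Ioc 0 (cdf μ x) ⊆ Ioo 0 1 from fun t ht => ⟨ht.1, ht.2.trans_lt h1⟩),
      Real.volume_Ioc, sub_zero]
  · rw [h1, inter_eq_right.2 Ioo_subset_Ioc_self, Real.volume_Ioo, sub_zero]

lemma integrableOn_comp_quantile_iff {f : ℝ → ℝ} (hf : AEStronglyMeasurable f μ) :
    IntegrableOn (fun t => f (quantile μ t)) (Ioo 0 1) ↔ Integrable f μ := by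
  have h := integrable_map_measure (g := f) (by rwa [map_quantile_uniform (μ := μ)])
    (aemeasurable_quantile (μ := μ))
  rw [map_quantile_uniform] at h
  exact h.symm

lemma setIntegral_comp_quantile {f : ℝ → ℝ} (hf : AEStronglyMeasurable f μ) :
    ∫ t in Ioo (0:ℝ) 1, f (quantile μ t) = ∫ x, f x ∂μ := by
  rw [← integral_map aemeasurable_quantile (by rwa [map_quantile_uniform]), map_quantile_uniform]

end ProbabilityTheory

section RandomVariable

variable {Ω : Type*} [MeasurableSpace Ω] {P : Measure Ω} {X Y Z : Ω → ℝ}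

lemma lorenz_eq_setIntegral (Z : Ω → ℝ) {p : ℝ} (hp : 0 ≤ p) :
    lorenz P Z p = ∫ t in Ioo (0:ℝ) p, qf P Z t := by
  rw [lorenz, intervalIntegral.integral_of_le hp, integral_Ioc_eq_integral_Ioo]

lemma W1_eq_setIntegral (X Z : Ω → ℝ) :
    W1 P X Z = ∫ t in Ioo (0:ℝ) 1, |qf P X t - qf P Z t| := by
  rw [W1, intervalIntegral.integral_of_le zero_le_one, integral_Ioc_eq_integral_Ioo]

lemma le_distA2 (hY : Integrable Y P) {c : ℝ}
    (h : ∀ Z, Integrable Z P → SSD P Z Y → c ≤ W1 P X Z) : c ≤ distA2 P X Y :=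
  le_csInf ⟨_, Y, hY, fun _ => le_rfl, rfl⟩ fun _ ⟨Z, hZ, hZY, hd⟩ => hd ▸ h Z hZ hZY

variable [IsProbabilityMeasure P]

lemma qf_eq_quantile_map (hZ : AEMeasurable Z P) : qf P Z = quantile (P.map Z) := by
  have := Measure.isProbabilityMeasure_map hZ
  funext p
  simp only [qf, quantile, cdfRV, cdf_eq_real, measureReal_def,
    Measure.map_apply_of_aemeasurable hZ measurableSet_Iic]
  rfl

lemma monotoneOn_qf (hZ : AEMeasurable Z P) : MonotoneOn (qf P Z) (Ioo (0:ℝ) 1) := by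
  have := Measure.isProbabilityMeasure_map hZ
  rw [qf_eq_quantile_map hZ]
  exact monotoneOn_quantile

lemma integrableOn_comp_qf {f : ℝ → ℝ} (hf : Continuous f) (hZ : AEMeasurable Z P)
    (hfZ : Integrable (fun ω => f (Z ω)) P) :
    IntegrableOn (fun t => f (qf P Z t)) (Ioo 0 1) := by
  have := Measure.isProbabilityMeasure_map hZ
  rw [qf_eq_quantile_map hZ, integrableOn_comp_quantile_iff hf.aestronglyMeasurable,
    integrable_map_measure hf.aestronglyMeasurable hZ]
  exact hfZ

lemma setIntegral_comp_qf {f : ℝ → ℝ} (hf : Continuous f) (hZ : AEMeasurable Z P) :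
    ∫ t in Ioo (0:ℝ) 1, f (qf P Z t) = ∫ ω, f (Z ω) ∂P := by
  have := Measure.isProbabilityMeasure_map hZ
  rw [qf_eq_quantile_map hZ, setIntegral_comp_quantile hf.aestronglyMeasurable,
    integral_map hZ hf.aestronglyMeasurable]

lemma integrableOn_qf (hZ : Integrable Z P) : IntegrableOn (qf P Z) (Ioo 0 1) :=
  integrableOn_comp_qf continuous_id hZ.aemeasurable hZ

lemma integrableOn_posPart_sub_qf (hZ : Integrable Z P) (η : ℝ) :
    IntegrableOn (fun t => max (η - qf P Z t) 0) (Ioo 0 1) :=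
  integrableOn_comp_qf (f := fun z => max (η - z) 0) (by fun_prop) hZ.aemeasurable
    ((integrable_const η).sub hZ).pos_part

lemma shortfall_eq_setIntegral_qf (hZ : AEMeasurable Z P) (η : ℝ) :
    shortfall P Z η = ∫ t in Ioo (0:ℝ) 1, max (η - qf P Z t) 0 :=
  (setIntegral_comp_qf (f := fun z => max (η - z) 0) (by fun_prop) hZ).symm

lemma continuousOn_lorenz (hZ : Integrable Z P) : ContinuousOn (lorenz P Z) (Icc (0:ℝ) 1) := by
  have hq : IntegrableOn (qf P Z) (uIcc 0 1) := by
    rw [uIcc_of_le zero_le_one, integrableOn_Icc_iff_integrableOn_Ioo]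
    exact integrableOn_qf hZ
  have h := intervalIntegral.continuousOn_primitive_interval (a := 0) (b := 1) hq
  rwa [uIcc_of_le zero_le_one] at h

lemma mul_sub_shortfall_le_lorenz (hZ : Integrable Z P) {p : ℝ} (hp : p ∈ Icc (0:ℝ) 1) (η : ℝ) :
    p * η - shortfall P Z η ≤ lorenz P Z p := by
  have hsub : Ioo (0:ℝ) p ⊆ Ioo 0 1 := Ioo_subset_Ioo_right hp.2
  have hq : IntegrableOn (qf P Z) (Ioo 0 p) := (integrableOn_qf hZ).mono_set hsub
  have hpos := integrableOn_posPart_sub_qf hZ η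
  calc p * η - shortfall P Z η
      = (∫ t in Ioo 0 p, (η - qf P Z t)) + lorenz P Z p - shortfall P Z η := by
        rw [integral_sub (integrable_const η) hq, setIntegral_const,
          Real.volume_real_Ioo_of_le hp.1, sub_zero, smul_eq_mul, lorenz_eq_setIntegral Z hp.1]
        ring
    _ ≤ (∫ t in Ioo 0 p, max (η - qf P Z t) 0) + lorenz P Z p - shortfall P Z η := by
        gcongr ?_ + _ - _
        exact integral_mono ((integrable_const η).sub hq) (hpos.mono_set hsub)
          fun t => le_max_left _ _
    _ ≤ shortfall P Z η + lorenz P Z p - shortfall P Z η := by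
        gcongr ?_ + _ - _
        rw [shortfall_eq_setIntegral_qf hZ.aemeasurable]
        exact setIntegral_mono_set hpos (ae_of_all _ fun t => le_max_right _ _)
          hsub.eventuallyLE
    _ = lorenz P Z p := by ring

lemma lorenz_eq_mul_qf_sub_shortfall (hZ : Integrable Z P) {p : ℝ} (hp : p ∈ Ioo (0:ℝ) 1) :
    lorenz P Z p = p * qf P Z p - shortfall P Z (qf P Z p) := by
  set η := qf P Z p
  have hsub : Ioo (0:ℝ) p ⊆ Ioo 0 1 := Ioo_subset_Ioo_right hp.2.le
  have hmono := monotoneOn_qf hZ.aemeasurable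
  have hpos : EqOn (fun t => max (η - qf P Z t) 0)
      ((Ioo (0:ℝ) p).indicator fun t => η - qf P Z t) (Ioo 0 1) := fun t ht => by
    by_cases htp : t < p
    · rw [indicator_of_mem (show t ∈ Ioo 0 p from ⟨ht.1, htp⟩)]
      exact max_eq_left (sub_nonneg.2 (hmono ht hp htp.le))
    · rw [indicator_of_notMem fun h => htp h.2]
      exact max_eq_right (sub_nonpos.2 (hmono hp ht (not_lt.1 htp)))
  rw [shortfall_eq_setIntegral_qf hZ.aemeasurable, setIntegral_congr_fun measurableSet_Ioo hpos,
    setIntegral_indicator measurableSet_Ioo, inter_eq_right.2 hsub,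
    integral_sub (integrable_const η) ((integrableOn_qf hZ).mono_set hsub), setIntegral_const,
    Real.volume_real_Ioo_of_le hp.1.le, sub_zero, smul_eq_mul, lorenz_eq_setIntegral Z hp.1.le]
  ring

lemma lorenz_le_lorenz_of_SSD (hY : Integrable Y P) (hZ : Integrable Z P) (hZY : SSD P Z Y)
    {p : ℝ} (hp : p ∈ Icc (0:ℝ) 1) : lorenz P Y p ≤ lorenz P Z p := by
  have hinterior : ∀ p ∈ Ioo (0:ℝ) 1, lorenz P Y p ≤ lorenz P Z p := fun p hp => by
    rw [lorenz_eq_mul_qf_sub_shortfall hY hp]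
    linarith [hZY (qf P Y p), mul_sub_shortfall_le_lorenz hZ (Ioo_subset_Icc_self hp) (qf P Y p)]
  have hcl : closure (Ioo (0:ℝ) 1) = Icc 0 1 := closure_Ioo zero_ne_one
  exact le_on_closure hinterior (hcl ▸ continuousOn_lorenz hY) (hcl ▸ continuousOn_lorenz hZ)
    (hcl ▸ hp)

lemma lorenz_sub_lorenz_le_W1 (hX : Integrable X P) (hZ : Integrable Z P) {p : ℝ}
    (hp : p ∈ Icc (0:ℝ) 1) : lorenz P Z p - lorenz P X p ≤ W1 P X Z := by
  have hsub : Ioo (0:ℝ) p ⊆ Ioo 0 1 := Ioo_subset_Ioo_right hp.2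
  have habs : IntegrableOn (fun t => |qf P X t - qf P Z t|) (Ioo 0 1) :=
    ((integrableOn_qf hX).sub (integrableOn_qf hZ)).abs
  calc lorenz P Z p - lorenz P X p = ∫ t in Ioo 0 p, (qf P Z t - qf P X t) := by
        rw [lorenz_eq_setIntegral Z hp.1, lorenz_eq_setIntegral X hp.1,
          integral_sub ((integrableOn_qf hZ).mono_set hsub) ((integrableOn_qf hX).mono_set hsub)]
    _ ≤ ∫ t in Ioo 0 p, |qf P X t - qf P Z t| :=
        integral_mono (((integrableOn_qf hZ).sub (integrableOn_qf hX)).mono_set hsub)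
          (habs.mono_set hsub) fun t => (le_abs_self _).trans_eq (abs_sub_comm _ _)
    _ ≤ ∫ t in Ioo 0 1, |qf P X t - qf P Z t| :=
        setIntegral_mono_set habs (ae_of_all _ fun _ => abs_nonneg _) hsub.eventuallyLE
    _ = W1 P X Z := (W1_eq_setIntegral X Z).symm

lemma shortfall_sub_shortfall_le_W1 (hX : Integrable X P) (hZ : Integrable Z P) (η : ℝ) :
    shortfall P X η - shortfall P Z η ≤ W1 P X Z := by
  rw [shortfall_eq_setIntegral_qf hX.aemeasurable, shortfall_eq_setIntegral_qf hZ.aemeasurable,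
    ← integral_sub (integrableOn_posPart_sub_qf hX η) (integrableOn_posPart_sub_qf hZ η),
    W1_eq_setIntegral]
  refine integral_mono ((integrableOn_posPart_sub_qf hX η).sub (integrableOn_posPart_sub_qf hZ η))
    ((integrableOn_qf hX).sub (integrableOn_qf hZ)).abs fun t => ?_
  calc max (η - qf P X t) 0 - max (η - qf P Z t) 0
      ≤ |(η - qf P X t) - (η - qf P Z t)| := (le_abs_self _).trans (abs_max_sub_max_le_abs _ _ _)
    _ = |qf P X t - qf P Z t| := by rw [sub_sub_sub_cancel_left, abs_sub_comm]

end RandomVariable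

theorem stmt7_general {Ω : Type*} [MeasurableSpace Ω] (P : Measure Ω) [IsProbabilityMeasure P]
    (X Y : Ω → ℝ) (hX : Integrable X P) (hY : Integrable Y P) :
    sSup ((fun p => lorenz P Y p - lorenz P X p) '' Set.Icc (0:ℝ) 1) ≤ distA2 P X Y ∧
    sSup (Set.range fun η : ℝ => shortfall P X η - shortfall P Y η) ≤ distA2 P X Y := by
  constructor
  · refine csSup_le ((nonempty_Icc.2 zero_le_one).image _) ?_
    rintro _ ⟨p, hp, rfl⟩
    refine le_distA2 hY fun Z hZ hZY => ?_
    linarith [lorenz_le_lorenz_of_SSD hY hZ hZY hp, lorenz_sub_lorenz_le_W1 hX hZ hp]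
  · refine csSup_le (range_nonempty _) ?_
    rintro _ ⟨η, rfl⟩
    refine le_distA2 hY fun Z hZ hZY => ?_
    linarith [hZY η, shortfall_sub_shortfall_le_W1 hX hZ η]

/-- lower bounds for `dist(X, A₂(Y))` by the Lorenz-function gap and the
shortfall-function gap. -/
theorem stmt7 {Ω : Type*} [MeasurableSpace Ω] (P : Measure Ω) [IsProbabilityMeasure P]
    (hP : Atomless P) (X Y : Ω → ℝ) (hX : Integrable X P) (hY : Integrable Y P) :
    sSup ((fun p => lorenz P Y p - lorenz P X p) '' Set.Icc (0:ℝ) 1) ≤ distA2 P X Y ∧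
    sSup (Set.range fun η : ℝ => shortfall P X η - shortfall P Y η) ≤ distA2 P X Y :=
  stmt7_general P X Y hX hY

end
end
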